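/- Suppose the anchor ρ : L → Der_R(A) is injective. Then a connection ∇ on L is a Cartan connection if and only if the induced operation ∇̄_X V := ρ(∇_V X) + ⁅ρ(X), V⁆ on Der_R(A) is flat, i.e. ∇̄_X(∇̄_Y V) − ∇̄_Y(∇̄_X V) − ∇̄_{⁅X,Y⁆} V = 0 for all X, Y ∈ L and V ∈ Der_R(A). (Section 2.3: for injective anchor, flatness of the induced 𝔤-connection on TM is necessary and sufficient for compatibility.) -/
import Mathlib


variable {R A L : Type*} [CommRing R] [CommRing A] [Algebra R A]
  [LieRing L] [LieAlgebra R L] [Module A L]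
  [IsScalarTower R A L] [SMulCommClass R A L] [SMulCommClass A R L]

/-- The induced `𝔤`-connection on derivations: `∇̄_X V := ρ(∇_V X) + ⁅ρ(X), V⁆`. -/
def barDer (ρ : L →ₗ[A] Derivation R A A) (D : Derivation R A A → L → L)
    (X : L) (V : Derivation R A A) : Derivation R A A :=
  ρ (D V X) + ⁅ρ X, V⁆

/-- The induced `𝔤`-connection of `L` on itself: `∇̄_X Y := ∇_{ρ(Y)} X + ⁅X, Y⁆`. -/
def barSelf (ρ : L →ₗ[A] Derivation R A A) (D : Derivation R A A → L → L)
    (X Y : L) : L :=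
  D (ρ Y) X + ⁅X, Y⁆

/-- `D` is a connection on `L`: additive in both arguments, `A`-linear in the
derivation argument, and satisfying the Leibniz rule. -/
def IsConnection (D : Derivation R A A → L → L) : Prop :=
  (∀ (V W : Derivation R A A) (X : L), D (V + W) X = D V X + D W X) ∧
  (∀ (V : Derivation R A A) (X Y : L), D V (X + Y) = D V X + D V Y) ∧
  (∀ (a : A) (V : Derivation R A A) (X : L), D (a • V) X = a • D V X) ∧
  (∀ (V : Derivation R A A) (a : A) (X : L), D V (a • X) = a • D V X + V a • X)

/-- `D` is a Cartan connection: it is compatible with the bracket of `L`. -/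
def IsCartanConnection (ρ : L →ₗ[A] Derivation R A A)
    (D : Derivation R A A → L → L) : Prop :=
  ∀ (V : Derivation R A A) (X Y : L),
    D V ⁅X, Y⁆ = ⁅D V X, Y⁆ + ⁅X, D V Y⁆
      + D (barDer ρ D Y V) X - D (barDer ρ D X V) Y

/-- If the anchor `ρ` is injective, then a connection `∇` on `L` is
a Cartan connection if and only if the induced operation `∇̄` on `Der_R(A)` is flat. -/
theorem injective_anchor_cartan_iff_flat
(ρ : L →ₗ[A] Derivation R A A)
    (hanchor : ∀ X Y : L, ρ ⁅X, Y⁆ = ⁅ρ X, ρ Y⁆)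
    (hleib : ∀ (X : L) (a : A) (Y : L), ⁅X, a • Y⁆ = a • ⁅X, Y⁆ + ρ X a • Y)
    (D : Derivation R A A → L → L) (hD : IsConnection D)
    (hinj : Function.Injective ρ) :
    IsCartanConnection ρ D ↔
      (∀ (X Y : L) (V : Derivation R A A),
        barDer ρ D X (barDer ρ D Y V) - barDer ρ D Y (barDer ρ D X V)
          - barDer ρ D ⁅X, Y⁆ V = 0) := by
  have key : ∀ (X Y : L) (V : Derivation R A A),
      barDer ρ D X (barDer ρ D Y V) - barDer ρ D Y (barDer ρ D X V)
        - barDer ρ D ⁅X, Y⁆ V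
      = ρ (⁅D V X, Y⁆ + ⁅X, D V Y⁆ + D (barDer ρ D Y V) X
          - D (barDer ρ D X V) Y - D V ⁅X, Y⁆) := by
    intro X Y V
    simp only [barDer, map_add, map_sub, hanchor, lie_add, add_lie, lie_sub, sub_lie,
      lie_lie]
    rw [← lie_skew (ρ Y) (ρ (D V X))]
    abel
  constructor
  · intro h X Y V
    rw [key, h V X Y, sub_self, map_zero]
  · intro h V X Y
    have h2 := h X Y V
    rw [key] at h2
    have h3 : (⁅D V X, Y⁆ + ⁅X, D V Y⁆ + D (barDer ρ D Y V) X
        - D (barDer ρ D X V) Y - D V ⁅X, Y⁆) = 0 := hinj (by rw [map_zero]; exact h2)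
    have h4 := sub_eq_zero.mp h3
    exact h4.symm
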